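/- (Convergence of the DC algorithm cost values.) Let F₁ : ℝⁿ → ℝ ∪ {+∞} be proper, lower semicontinuous and convex, let F₂ : ℝ^q → ℝ ∪ {+∞} be proper, lower semicontinuous and convex, let Φ : ℝ^q → ℝ be a differentiable convex function with Lipschitz continuous gradient, let Ξ : ℝⁿ → ℝ^q be linear, and assume F₂ □ Φ is exact. Define J(x) := F₁(x) − (F₂ □ Φ)(Ξx), assume J is proper, lower semicontinuous and convex, and assume argmin_{x ∈ ℝⁿ} J(x) is nonempty and bounded; set α := min_{x ∈ ℝⁿ} J(x). Let sequences (x_k), (z_k), (u_k) satisfy for every k: z_k ∈ argmin_{z ∈ ℝ^q} ( F₂(z) + Φ(Ξx_k − z) ), u_k = Ξᵀ∇Φ(Ξx_k − z_k), and x_{k+1} ∈ argmin_{x ∈ ℝⁿ} ( F₁(x) − ⟨u_k, x⟩ ). Then lim_{k→∞} J(x_k) = α. -/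

import Mathlib

open scoped RealInnerProductSpace

/-- Infimal convolution of two extended-real-valued functions. -/
noncomputable def infConv {E : Type*} [SubtractionMonoid E] (f g : E → EReal) (x : E) : EReal :=
  ⨅ z : E, f z + g (x - z)

/-- Convexity for extended-real-valued functions. -/
def ERealConvexOn {E : Type*} [AddCommMonoid E] [SMul ℝ E] (f : E → EReal) : Prop :=
  ∀ x y : E, ∀ a b : ℝ, 0 ≤ a → 0 ≤ b → a + b = 1 →
    f (a • x + b • y) ≤ (a : EReal) * f x + (b : EReal) * f y

/-- A function into ℝ ∪ {+∞} is proper: it never takes the value −∞ and is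
finite somewhere. -/
def ERealProper {E : Type*} (f : E → EReal) : Prop :=
  (∀ x, f x ≠ ⊥) ∧ ∃ x, f x ≠ ⊤

section auxlemmas
open InnerProductSpace
lemma ereal_sub_coe_eq {X : EReal} {r c : ℝ} (h : X - (r : EReal) = (c : EReal)) :
    X = ((c + r : ℝ) : EReal) := by
  induction X with
  | bot => rw [show ((⊥:EReal) - (r:EReal)) = ⊥ from rfl] at h; exact absurd h (by simp)
  | coe x =>
      rw [← EReal.coe_sub, EReal.coe_eq_coe_iff] at h
      rw [EReal.coe_eq_coe_iff]; linarith
  | top => rw [EReal.top_sub_coe] at h; exact absurd h (by simp)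

lemma ereal_add_coe_eq {X : EReal} {r c : ℝ} (hb : X ≠ ⊥) (h : X + (r : EReal) = (c : EReal)) :
    X = ((c - r : ℝ) : EReal) := by
  induction X with
  | bot => exact absurd rfl hb
  | coe x =>
      rw [← EReal.coe_add, EReal.coe_eq_coe_iff] at h
      rw [EReal.coe_eq_coe_iff]; linarith
  | top => rw [EReal.top_add_coe] at h; exact absurd h (by simp)

variable {E : Type*} [NormedAddCommGroup E] [InnerProductSpace ℝ E] [CompleteSpace E]

lemma grad_inner (Φ : E → ℝ) (x v : E) (h : DifferentiableAt ℝ Φ x) :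
    fderiv ℝ Φ x v = ⟪gradient Φ x, v⟫ := by
  rw [gradient, toDual_symm_apply]

lemma descent_lemma (Φ : E → ℝ) (hd : Differentiable ℝ Φ) (K : NNReal)
    (hl : LipschitzWith K (fun z => gradient Φ z)) (x y : E) :
    Φ y ≤ Φ x + ⟪gradient Φ x, y - x⟫ + K * ‖y - x‖ ^ 2 := by
  have key : ‖Φ y - Φ x - (fderiv ℝ Φ x) (y - x)‖ ≤ (K * ‖y - x‖) * ‖y - x‖ := by
    apply Convex.norm_image_sub_le_of_norm_hasFDerivWithin_le'
      (f' := fun z => fderiv ℝ Φ z) (s := segment ℝ x y)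
      (fun z _ => (hd z).hasFDerivAt.hasFDerivWithinAt)
      ?_ (convex_segment x y) (left_mem_segment ℝ x y) (right_mem_segment ℝ x y)
    rintro z hz
    have h1 : fderiv ℝ Φ z - fderiv ℝ Φ x = toDual ℝ E (gradient Φ z - gradient Φ x) := by
      simp [gradient, map_sub]
    have h2 : ‖fderiv ℝ Φ z - fderiv ℝ Φ x‖ = ‖gradient Φ z - gradient Φ x‖ := by
      rw [h1, (toDual ℝ E).norm_map]
    rw [h2]
    have := hl.dist_le_mul z x
    rw [dist_eq_norm, dist_eq_norm] at this
    calc ‖gradient Φ z - gradient Φ x‖ ≤ K * ‖z - x‖ := this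
      _ ≤ K * ‖y - x‖ := by
          gcongr
          obtain ⟨a, b, ha, hb, hab, rfl⟩ := hz
          have : a • x + b • y - x = b • (y - x) := by
            rw [smul_sub]; rw [show a = 1 - b by linarith]; module
          rw [this, norm_smul]
          have hb1 : b ≤ 1 := by linarith
          simpa using mul_le_of_le_one_left (norm_nonneg _) (by simp [abs_of_nonneg hb, hb1])
  have h3 : (fderiv ℝ Φ x) (y - x) = ⟪gradient Φ x, y - x⟫ := grad_inner Φ x _ (hd x)
  have h4 : Φ y - Φ x - ⟪gradient Φ x, y - x⟫ ≤ (K * ‖y - x‖) * ‖y - x‖ :=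
    (le_abs_self _).trans (by rw [← Real.norm_eq_abs, ← h3]; exact key)
  nlinarith [sq_abs (‖y-x‖), sq_nonneg (‖y - x‖)]

lemma convex_grad_ineq (Φ : E → ℝ) (hd : Differentiable ℝ Φ)
    (hc : ConvexOn ℝ Set.univ Φ) (x y : E) :
    Φ x + ⟪gradient Φ x, y - x⟫ ≤ Φ y := by
  set d : ℝ := ⟪gradient Φ x, y - x⟫ with hdd
  have hline : HasDerivAt (fun t : ℝ => Φ (x + t • (y - x))) d 0 := by
    have h1 : HasDerivAt (fun t : ℝ => x + t • (y - x)) (y - x) 0 := by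
      simpa using ((hasDerivAt_id (0:ℝ)).smul_const (y - x)).const_add x
    have hx0 : HasFDerivAt Φ (fderiv ℝ Φ x) (x + (0:ℝ) • (y - x)) := by
      simpa using (hd x).hasFDerivAt
    have h2 := hx0.comp_hasDerivAt 0 h1
    rw [grad_inner Φ x (y - x) (hd x)] at h2; exact h2
  have hslope : Filter.Tendsto (slope (fun t : ℝ => Φ (x + t • (y - x))) 0)
      (nhdsWithin 0 (Set.Ioi 0)) (nhds d) :=
    (hasDerivAt_iff_tendsto_slope.1 hline).mono_left
      (nhdsWithin_mono _ (fun t ht => ne_of_gt ht))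
  have hbound : ∀ t ∈ Set.Ioo (0:ℝ) 1,
      slope (fun t : ℝ => Φ (x + t • (y - x))) 0 t ≤ Φ y - Φ x := by
    intro t ht
    have hconv := hc.2 (Set.mem_univ x) (Set.mem_univ y) (by linarith [ht.2] : (0:ℝ) ≤ 1 - t)
      (le_of_lt ht.1) (by ring)
    have heq : (1 - t) • x + t • y = x + t • (y - x) := by module
    rw [heq] at hconv
    rw [slope_def_field]
    simp only [zero_smul, add_zero, sub_zero]
    rw [div_le_iff₀ ht.1]
    simp only [smul_eq_mul] at hconv
    nlinarith [hconv]
  have : d ≤ Φ y - Φ x := by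
    refine le_of_tendsto hslope ?_
    filter_upwards [Ioo_mem_nhdsGT_of_mem (by norm_num : (0:ℝ) ∈ Set.Ico (0:ℝ) 1)] with t ht
    exact hbound t ht
  linarith

lemma sublevel_bounded {E : Type*} [NormedAddCommGroup E] [NormedSpace ℝ E] [ProperSpace E]
    (J : E → EReal) (hconv : ERealConvexOn J) (hlsc : LowerSemicontinuous J)
    (hnb : ∀ x, J x ≠ ⊥)
    (x₀ : E) (hmin : ∀ w, J x₀ ≤ J w) (α : ℝ) (hα : J x₀ = (α : EReal))
    (hbdd : Bornology.IsBounded {x : E | ∀ w, J x ≤ J w}) (c : ℝ) :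
    Bornology.IsBounded {x : E | J x ≤ (c : EReal)} := by
  by_contra hS
  rw [isBounded_iff_forall_norm_le] at hS
  push_neg at hS
  -- choose unbounded sequence in the sublevel set
  have hy : ∀ m : ℕ, ∃ y, J y ≤ (c : EReal) ∧ (m : ℝ) + ‖x₀‖ + 1 < ‖y‖ := by
    intro m
    obtain ⟨y, hy1, hy2⟩ := hS ((m : ℝ) + ‖x₀‖ + 1)
    exact ⟨y, hy1, hy2⟩
  choose y hyS hyn using hy
  set T : ℕ → ℝ := fun m => ‖y m - x₀‖ with hT
  have hTpos : ∀ m : ℕ, (m : ℝ) + 1 < T m := by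
    intro m
    have h1 := norm_sub_norm_le (y m) x₀
    have h2 := hyn m
    simp only [hT]
    linarith
  have hT0 : ∀ m, (0:ℝ) < T m := fun m => lt_of_le_of_lt (by positivity) (hTpos m)
  set d : ℕ → E := fun m => (T m)⁻¹ • (y m - x₀) with hd
  have hdmem : ∀ m, d m ∈ Metric.sphere (0:E) 1 := by
    intro m
    simp only [hd, mem_sphere_iff_norm, sub_zero, norm_smul, norm_inv,
      Real.norm_eq_abs, abs_of_pos (hT0 m)]
    exact inv_mul_cancel₀ (ne_of_gt (hT0 m))
  obtain ⟨dl, hdl, φ, hφ, hconv_d⟩ := (isCompact_sphere (0:E) 1).tendsto_subseq hdmem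
  -- J is ≤ α on the whole ray x₀ + t • dl
  have hray : ∀ t : ℝ, 0 < t → J (x₀ + t • dl) ≤ (α : EReal) := by
    intro t ht
    by_contra hgt
    push_neg at hgt
    obtain ⟨β, hβ1, hβ2⟩ := exists_between hgt
    have hev1 : ∀ᶠ i in Filter.atTop, β < J (x₀ + t • d (φ i)) := by
      have hcont : Filter.Tendsto (fun i => x₀ + t • d (φ i)) Filter.atTop (nhds (x₀ + t • dl)) :=
        (Filter.Tendsto.const_smul hconv_d t).const_add x₀
      exact hcont.eventually (hlsc (x₀ + t • dl) β hβ2)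
    -- convexity bound along the sequence
    have hbound : ∀ i : ℕ, t ≤ T (φ i) →
        J (x₀ + t • d (φ i)) ≤ ((1 - t / T (φ i)) * α + (t / T (φ i)) * c : ℝ) := by
      intro i hti
      set s : ℝ := t / T (φ i) with hs
      have hs0 : 0 < s := div_pos ht (hT0 _)
      have hs1 : s ≤ 1 := (div_le_one (hT0 _)).2 hti
      have hpt : x₀ + t • d (φ i) = (1 - s) • x₀ + s • (y (φ i)) := by
        have hs' : s = t * (T (φ i))⁻¹ := div_eq_mul_inv t _
        simp only [hd, smul_smul, ← hs']
        module
      -- J (y (φ i)) is real and ≤ c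
      have hyreal : ∃ r : ℝ, J (y (φ i)) = (r : EReal) ∧ r ≤ c := by
        have h1 := hyS (φ i)
        have h2 := hnb (y (φ i))
        refine ⟨(J (y (φ i))).toReal, ?_, ?_⟩
        · rw [EReal.coe_toReal (ne_top_of_le_ne_top (EReal.coe_ne_top c) h1) h2]
        · have := EReal.toReal_le_toReal h1 h2 (EReal.coe_ne_top c)
          simpa using this
      obtain ⟨r, hr, hrc⟩ := hyreal
      have := hconv x₀ (y (φ i)) (1 - s) s (by linarith) (le_of_lt hs0) (by ring)
      rw [hα, hr] at this
      rw [hpt]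
      calc J ((1 - s) • x₀ + s • y (φ i))
          ≤ ((1 - s : ℝ) : EReal) * (α : EReal) + ((s : ℝ) : EReal) * (r : EReal) := this
        _ = (((1 - s) * α + s * r : ℝ) : EReal) := by
            rw [← EReal.coe_mul, ← EReal.coe_mul, ← EReal.coe_add]
        _ ≤ (((1 - s) * α + s * c : ℝ) : EReal) := by
            apply EReal.coe_le_coe_iff.2
            nlinarith
    -- the real bound tends to α
    have hstend : Filter.Tendsto (fun i : ℕ => t / T (φ i)) Filter.atTop (nhds 0) := by
      apply squeeze_zero (fun i => le_of_lt (div_pos ht (hT0 _)))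
        (g := fun i : ℕ => t / ((i : ℝ) + 1))
      · intro i
        apply div_le_div_of_nonneg_left (le_of_lt ht) (by positivity)
        have h5 : (i : ℝ) ≤ (φ i : ℝ) := Nat.cast_le.2 (hφ.id_le i)
        linarith [hTpos (φ i)]
      · have : Filter.Tendsto (fun i : ℕ => (i : ℝ) + 1) Filter.atTop Filter.atTop :=
          Filter.tendsto_atTop_add_const_right _ 1 tendsto_natCast_atTop_atTop
        simpa using Filter.Tendsto.div_atTop tendsto_const_nhds this
    have htends : Filter.Tendsto
        (fun i : ℕ => (((1 - t / T (φ i)) * α + (t / T (φ i)) * c : ℝ) : EReal))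
        Filter.atTop (nhds ((α : ℝ) : EReal)) := by
      rw [EReal.tendsto_coe]
      have : Filter.Tendsto (fun i : ℕ => (1 - t / T (φ i)) * α + (t / T (φ i)) * c)
          Filter.atTop (nhds ((1 - 0) * α + 0 * c)) := by
        exact (((tendsto_const_nhds.sub hstend).mul tendsto_const_nhds).add
          (hstend.mul tendsto_const_nhds))
      simpa using this
    have hev2 : ∀ᶠ i in Filter.atTop,
        (((1 - t / T (φ i)) * α + (t / T (φ i)) * c : ℝ) : EReal) < β :=
      htends.eventually_lt_const hβ1
    have hev3 : ∀ᶠ i in Filter.atTop, t ≤ T (φ i) := by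
      filter_upwards [Filter.eventually_ge_atTop (Nat.ceil t)] with i hi
      calc t ≤ (Nat.ceil t : ℝ) := Nat.le_ceil t
        _ ≤ (i : ℝ) := Nat.cast_le.2 hi
        _ ≤ (φ i : ℝ) + 1 := by
              have h6 : (i : ℝ) ≤ (φ i : ℝ) := Nat.cast_le.2 (hφ.id_le i)
              linarith
        _ ≤ T (φ i) := le_of_lt (hTpos _)
    obtain ⟨i, h1, h2, h3⟩ := (hev1.and (hev2.and hev3)).exists
    exact absurd ((hbound i h3).trans_lt h2) (not_lt_of_gt h1)
  -- now the argmin set is unbounded: contradiction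
  rw [isBounded_iff_forall_norm_le] at hbdd
  obtain ⟨C, hC⟩ := hbdd
  set t : ℝ := max C 0 + ‖x₀‖ + 1 with htt
  have htpos : 0 < t := by
    have := le_max_right C (0:ℝ)
    have := norm_nonneg x₀
    simp only [htt]
    linarith
  have hmem : (x₀ + t • dl) ∈ {x : E | ∀ w, J x ≤ J w} := by
    intro w
    exact le_trans (le_trans (hray t htpos) (le_of_eq hα.symm)) (hmin w)
  have := hC _ hmem
  have hdl1 : ‖dl‖ = 1 := by simpa using hdl
  have hfin : t - ‖x₀‖ ≤ C := by
    have h1 : ‖t • dl‖ ≤ ‖x₀ + t • dl‖ + ‖x₀‖ := by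
      have h2 := norm_sub_le (x₀ + t • dl) x₀
      simpa using h2
    rw [norm_smul, hdl1, Real.norm_eq_abs, abs_of_pos htpos, mul_one] at h1
    linarith [hC _ hmem]
  simp only [htt] at hfin
  linarith [le_max_left C (0:ℝ), le_max_right C (0:ℝ)]

end auxlemmas

set_option maxHeartbeats 1000000 in
/-- The DC algorithm cost values converge to the minimum value `α` of `J`. -/
theorem dc_algorithm_cost_converges {n q : ℕ}
    (F₁ : EuclideanSpace ℝ (Fin n) → EReal)
    (F₂ : EuclideanSpace ℝ (Fin q) → EReal)
    (Φ : EuclideanSpace ℝ (Fin q) → ℝ)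
    (Ξ : EuclideanSpace ℝ (Fin n) →ₗ[ℝ] EuclideanSpace ℝ (Fin q))
    (hF₁proper : ERealProper F₁) (hF₁lsc : LowerSemicontinuous F₁)
    (hF₁conv : ERealConvexOn F₁)
    (hF₂proper : ERealProper F₂) (hF₂lsc : LowerSemicontinuous F₂)
    (hF₂conv : ERealConvexOn F₂)
    (hΦdiff : Differentiable ℝ Φ) (hΦconv : ConvexOn ℝ Set.univ Φ)
    (hΦlip : ∃ K : NNReal, LipschitzWith K (fun z => gradient Φ z))
    (hexact : ∀ s, ∃ zs,
      F₂ zs + (Φ (s - zs) : EReal) = infConv F₂ (fun z => (Φ z : EReal)) s ∧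
      ∃ r : ℝ, infConv F₂ (fun z => (Φ z : EReal)) s = (r : EReal))
    (hJproper : ERealProper
      (fun x => F₁ x - infConv F₂ (fun z => (Φ z : EReal)) (Ξ x)))
    (hJlsc : LowerSemicontinuous
      (fun x => F₁ x - infConv F₂ (fun z => (Φ z : EReal)) (Ξ x)))
    (hJconv : ERealConvexOn
      (fun x => F₁ x - infConv F₂ (fun z => (Φ z : EReal)) (Ξ x)))
    (hargmin_ne : {x : EuclideanSpace ℝ (Fin n) | ∀ w,
        F₁ x - infConv F₂ (fun z => (Φ z : EReal)) (Ξ x)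
          ≤ F₁ w - infConv F₂ (fun z => (Φ z : EReal)) (Ξ w)}.Nonempty)
    (hargmin_bdd : Bornology.IsBounded {x : EuclideanSpace ℝ (Fin n) | ∀ w,
        F₁ x - infConv F₂ (fun z => (Φ z : EReal)) (Ξ x)
          ≤ F₁ w - infConv F₂ (fun z => (Φ z : EReal)) (Ξ w)})
    (xseq : ℕ → EuclideanSpace ℝ (Fin n))
    (zseq : ℕ → EuclideanSpace ℝ (Fin q))
    (useq : ℕ → EuclideanSpace ℝ (Fin n))
    (hz : ∀ k, ∀ w, F₂ (zseq k) + (Φ (Ξ (xseq k) - zseq k) : EReal)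
        ≤ F₂ w + (Φ (Ξ (xseq k) - w) : EReal))
    (hu : ∀ k, useq k = LinearMap.adjoint Ξ (gradient Φ (Ξ (xseq k) - zseq k)))
    (hx : ∀ k, ∀ w, F₁ (xseq (k + 1)) - ((⟪useq k, xseq (k + 1)⟫ : ℝ) : EReal)
        ≤ F₁ w - ((⟪useq k, w⟫ : ℝ) : EReal)) :
    Filter.Tendsto
      (fun k => F₁ (xseq k) - infConv F₂ (fun z => (Φ z : EReal)) (Ξ (xseq k)))
      Filter.atTop
      (nhds (⨅ w, (F₁ w - infConv F₂ (fun z => (Φ z : EReal)) (Ξ w)))) := by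
  classical
  obtain ⟨K, hK⟩ := hΦlip
  set G : EuclideanSpace ℝ (Fin q) → EReal := infConv F₂ (fun z => (Φ z : EReal)) with hG
  set J : EuclideanSpace ℝ (Fin n) → EReal := fun x => F₁ x - G (Ξ x) with hJdef
  have hGle : ∀ s z, G s ≤ F₂ z + (Φ (s - z) : EReal) := by
    intro s z
    rw [hG]
    exact iInf_le (fun z => F₂ z + (Φ (s - z) : EReal)) z
  have hGr : ∀ s, ∃ r : ℝ, G s = (r : EReal) := fun s => ((hexact s).choose_spec).2
  choose g hg using hGr
  have hzval : ∀ k, F₂ (zseq k) + (Φ (Ξ (xseq k) - zseq k) : EReal)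
      = ((g (Ξ (xseq k))) : EReal) := by
    intro k
    obtain ⟨zs, h1, -⟩ := hexact (Ξ (xseq k))
    refine le_antisymm ?_ ?_
    · rw [← hg (Ξ (xseq k)), ← h1]
      exact hz k zs
    · rw [← hg (Ξ (xseq k))]
      exact hGle _ _
  set b : ℕ → ℝ := fun k => g (Ξ (xseq k)) - Φ (Ξ (xseq k) - zseq k) with hb
  have hF₂z : ∀ k, F₂ (zseq k) = ((b k : ℝ) : EReal) := fun k =>
    ereal_add_coe_eq (hF₂proper.1 _) (hzval k)
  have hgb : ∀ k, g (Ξ (xseq k)) = b k + Φ (Ξ (xseq k) - zseq k) := by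
    intro k; simp only [hb]; ring
  obtain ⟨hF₁bot, w₀, hw₀⟩ := hF₁proper
  have hw₀' : F₁ w₀ = (((F₁ w₀).toReal : ℝ) : EReal) := (EReal.coe_toReal hw₀ (hF₁bot w₀)).symm
  have hF₁x : ∀ k, ∃ a : ℝ, F₁ (xseq (k+1)) = (a : EReal) := by
    intro k
    have h := hx k w₀
    rw [hw₀', ← EReal.coe_sub] at h
    refine ⟨(F₁ (xseq (k+1))).toReal, (EReal.coe_toReal ?_ (hF₁bot _)).symm⟩
    intro htop
    rw [htop, EReal.top_sub_coe] at h
    exact (EReal.coe_ne_top _ (top_le_iff.1 h)).elim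
  choose a ha using hF₁x
  obtain ⟨xm, hxm⟩ := hargmin_ne
  have hxm' : ∀ w, J xm ≤ J w := hxm
  obtain ⟨hJbot, w₁, hw₁⟩ := hJproper
  set α : ℝ := (J xm).toReal with hα
  have hJxm : J xm = (α : EReal) :=
    (EReal.coe_toReal (ne_top_of_le_ne_top hw₁ (hxm' w₁)) (hJbot xm)).symm
  have hiInf : (⨅ w, J w) = (α : EReal) := by
    refine le_antisymm ?_ (le_iInf fun w => hJxm ▸ hxm' w)
    rw [← hJxm]
    exact iInf_le (fun w => J w) xm
  have hF₁xm : F₁ xm = ((α + g (Ξ xm) : ℝ) : EReal) := by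
    have h : F₁ xm - ((g (Ξ xm) : ℝ) : EReal) = (α : EReal) := by
      rw [← hg (Ξ xm)]
      exact hJxm
    exact ereal_sub_coe_eq h
  set jv : ℕ → ℝ := fun k => a k - g (Ξ (xseq (k+1))) with hjv
  have hJx : ∀ k, J (xseq (k+1)) = ((jv k : ℝ) : EReal) := by
    intro k
    show F₁ (xseq (k+1)) - G (Ξ (xseq (k+1))) = _
    rw [ha k, hg, ← EReal.coe_sub]
  have hadj : ∀ k (w : EuclideanSpace ℝ (Fin n)),
      ⟪useq k, w⟫ = ⟪gradient Φ (Ξ (xseq k) - zseq k), Ξ w⟫ := by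
    intro k w
    rw [hu k]
    exact LinearMap.adjoint_inner_left Ξ w _
  -- quadratic upper bound for g along Ξ
  have hUB : ∀ k (w : EuclideanSpace ℝ (Fin n)),
      g (Ξ w) ≤ g (Ξ (xseq k)) + (⟪useq k, w⟫ - ⟪useq k, xseq k⟫)
        + (K : ℝ) * ‖Ξ w - Ξ (xseq k)‖^2 := by
    intro k w
    have h1 : g (Ξ w) ≤ b k + Φ (Ξ w - zseq k) := by
      have h := hGle (Ξ w) (zseq k)
      rw [hg (Ξ w), hF₂z k, ← EReal.coe_add] at h
      exact EReal.coe_le_coe_iff.1 h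
    have h2 := descent_lemma Φ hΦdiff K hK (Ξ (xseq k) - zseq k) (Ξ w - zseq k)
    have h3 : Ξ w - zseq k - (Ξ (xseq k) - zseq k) = Ξ w - Ξ (xseq k) := by abel
    rw [h3] at h2
    have h4 : ⟪gradient Φ (Ξ (xseq k) - zseq k), Ξ w - Ξ (xseq k)⟫
        = ⟪useq k, w⟫ - ⟪useq k, xseq k⟫ := by
      rw [inner_sub_right, ← hadj k w, ← hadj k (xseq k)]
    rw [h4] at h2
    have h5 := hgb k
    linarith
  -- subgradient inequality for F₂ at zseq k
  have hSUBG : ∀ k (w : EuclideanSpace ℝ (Fin q)) (r : ℝ), F₂ w = (r : EReal) →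
      b k + ⟪gradient Φ (Ξ (xseq k) - zseq k), w - zseq k⟫ ≤ r := by
    intro k w r hw
    have key : ∀ t : ℝ, 0 < t → t ≤ 1 →
        b k + ⟪gradient Φ (Ξ (xseq k) - zseq k), w - zseq k⟫
          ≤ r + (K : ℝ) * t * ‖w - zseq k‖^2 := by
      intro t ht0 ht1
      have hcv := hF₂conv (zseq k) w (1 - t) t (by linarith) (le_of_lt ht0) (by ring)
      rw [hF₂z k, hw, ← EReal.coe_mul, ← EReal.coe_mul, ← EReal.coe_add] at hcv
      have hpt : (1 - t) • zseq k + t • w = zseq k + t • (w - zseq k) := by module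
      rw [hpt] at hcv
      have hzz := hz k (zseq k + t • (w - zseq k))
      rw [hF₂z k, ← EReal.coe_add] at hzz
      have hzz2 : ((b k + Φ (Ξ (xseq k) - zseq k) : ℝ) : EReal)
          ≤ (((1-t) * b k + t * r : ℝ) : EReal) + (Φ (Ξ (xseq k) - (zseq k + t • (w - zseq k))) : EReal) :=
        le_trans hzz (add_le_add_left hcv _)
      rw [← EReal.coe_add] at hzz2
      have hreal := EReal.coe_le_coe_iff.1 hzz2
      have hdes := descent_lemma Φ hΦdiff K hK (Ξ (xseq k) - zseq k)
        (Ξ (xseq k) - (zseq k + t • (w - zseq k)))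
      have he1 : Ξ (xseq k) - (zseq k + t • (w - zseq k)) - (Ξ (xseq k) - zseq k)
          = -(t • (w - zseq k)) := by abel
      rw [he1] at hdes
      rw [inner_neg_right, real_inner_smul_right, norm_neg, norm_smul,
        Real.norm_eq_abs, abs_of_nonneg (le_of_lt ht0), mul_pow] at hdes
      have h6 := hgb k
      nlinarith [hreal, hdes, ht0]
    refine le_of_forall_pos_le_add fun ε hε => ?_
    have hC : (0:ℝ) < (K : ℝ) * ‖w - zseq k‖^2 + 1 := by positivity
    set t : ℝ := min 1 (ε / ((K : ℝ) * ‖w - zseq k‖^2 + 1)) with htdef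
    have ht0 : 0 < t := lt_min one_pos (div_pos hε hC)
    have h := key t ht0 (min_le_left _ _)
    have h2 : t ≤ ε / ((K : ℝ) * ‖w - zseq k‖^2 + 1) := min_le_right _ _
    have h3 : (K : ℝ) * t * ‖w - zseq k‖^2 ≤ ε := by
      have h4 : t * ((K : ℝ) * ‖w - zseq k‖^2 + 1) ≤ ε := by
        rw [← le_div_iff₀ hC] at *
        exact h2
      nlinarith [ht0.le, K.coe_nonneg, sq_nonneg ‖w - zseq k‖]
    linarith
  -- lower bound: subgradient inequality for g ∘ Ξ
  have hLB : ∀ k, g (Ξ (xseq k)) + (⟪useq k, xseq (k+1)⟫ - ⟪useq k, xseq k⟫)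
      ≤ g (Ξ (xseq (k+1))) := by
    intro k
    have h1 := hSUBG k (zseq (k+1)) (b (k+1)) (hF₂z (k+1))
    have h2 := convex_grad_ineq Φ hΦdiff hΦconv (Ξ (xseq k) - zseq k)
      (Ξ (xseq (k+1)) - zseq (k+1))
    have hvec : zseq (k+1) - zseq k
        + (Ξ (xseq (k+1)) - zseq (k+1) - (Ξ (xseq k) - zseq k))
        = Ξ (xseq (k+1)) - Ξ (xseq k) := by abel
    have h4 : ⟪gradient Φ (Ξ (xseq k) - zseq k), zseq (k+1) - zseq k⟫
        + ⟪gradient Φ (Ξ (xseq k) - zseq k), Ξ (xseq (k+1)) - zseq (k+1) - (Ξ (xseq k) - zseq k)⟫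
        = ⟪useq k, xseq (k+1)⟫ - ⟪useq k, xseq k⟫ := by
      rw [← inner_add_right, hvec, inner_sub_right, ← hadj k (xseq (k+1)), ← hadj k (xseq k)]
    have h5 := hgb k
    have h6 := hgb (k+1)
    linarith
  -- KEY inequality
  have hKEY : ∀ k (w : EuclideanSpace ℝ (Fin n)) (c : ℝ), F₁ w = (c : EReal) →
      jv k ≤ (c - g (Ξ w)) + (K : ℝ) * ‖Ξ w - Ξ (xseq k)‖^2 := by
    intro k w c hw
    have h1 := hLB k
    have h2 : a k - ⟪useq k, xseq (k+1)⟫ ≤ c - ⟪useq k, w⟫ := by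
      have h := hx k w
      rw [ha k, hw, ← EReal.coe_sub, ← EReal.coe_sub] at h
      exact EReal.coe_le_coe_iff.1 h
    have h3 := hUB k w
    show a k - g (Ξ (xseq (k+1))) ≤ _
    linarith
  have hmono : ∀ k, jv (k+1) ≤ jv k := by
    intro k
    have h := hKEY (k+1) (xseq (k+1)) (a k) (ha k)
    rw [sub_self, norm_zero] at h
    show jv (k+1) ≤ a k - g (Ξ (xseq (k+1)))
    calc jv (k+1) ≤ a k - g (Ξ (xseq (k+1))) + (K:ℝ) * 0^2 := h
      _ = a k - g (Ξ (xseq (k+1))) := by ring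
  have hge : ∀ k, α ≤ jv k := by
    intro k
    have h : (⨅ w, J w) ≤ J (xseq (k+1)) := iInf_le (fun w => J w) (xseq (k+1))
    rw [hiInf, hJx k] at h
    exact EReal.coe_le_coe_iff.1 h
  -- bounded sublevel set
  have hSb : Bornology.IsBounded {x : EuclideanSpace ℝ (Fin n) | J x ≤ ((jv 0 : ℝ) : EReal)} :=
    sublevel_bounded J hJconv hJlsc hJbot xm hxm' α hJxm hargmin_bdd (jv 0)
  rw [isBounded_iff_forall_norm_le] at hSb
  obtain ⟨R, hR⟩ := hSb
  have hxk_le : ∀ k, jv k ≤ jv 0 := fun k =>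
    antitone_nat_of_succ_le hmono (Nat.zero_le k)
  have hxkR : ∀ k, ‖xseq (k+1)‖ ≤ R := by
    intro k
    apply hR
    show J (xseq (k+1)) ≤ _
    rw [hJx k]
    exact EReal.coe_le_coe_iff.2 (hxk_le k)
  have hΞ : ∀ v : EuclideanSpace ℝ (Fin n),
      ‖Ξ v‖ ≤ ‖LinearMap.toContinuousLinearMap Ξ‖ * ‖v‖ := by
    intro v
    have h := (LinearMap.toContinuousLinearMap Ξ).le_opNorm v
    simpa using h
  set M : ℝ := ‖LinearMap.toContinuousLinearMap Ξ‖ * (R + ‖xm‖) + 1 with hM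
  have hMb : ∀ k, ‖Ξ xm - Ξ (xseq (k+1))‖ ≤ M := by
    intro k
    have h1 : Ξ xm - Ξ (xseq (k+1)) = Ξ (xm - xseq (k+1)) := (map_sub Ξ _ _).symm
    rw [h1]
    have h2 := hΞ (xm - xseq (k+1))
    have h3 : ‖xm - xseq (k+1)‖ ≤ ‖xm‖ + R := by
      have := norm_sub_le xm (xseq (k+1))
      linarith [hxkR k]
    have h4 : (0:ℝ) ≤ ‖LinearMap.toContinuousLinearMap Ξ‖ := norm_nonneg _
    nlinarith
  have hM0 : 0 ≤ M := le_trans (norm_nonneg (Ξ xm - Ξ (xseq 1))) (hMb 0)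
  -- recursion
  have hrec : ∀ k, ∀ t : ℝ, 0 ≤ t → t ≤ 1 →
      jv (k+1) - α ≤ (1-t) * (jv k - α) + ((K:ℝ) * M^2) * t^2 := by
    intro k t ht0 ht1
    set w : EuclideanSpace ℝ (Fin n) := (1 - t) • (xseq (k+1)) + t • xm with hw
    have hcv1 := hF₁conv (xseq (k+1)) xm (1-t) t (by linarith) ht0 (by ring)
    rw [ha k, hF₁xm, ← EReal.coe_mul, ← EReal.coe_mul, ← EReal.coe_add] at hcv1
    have hwne : F₁ w ≠ ⊤ := ne_top_of_le_ne_top (EReal.coe_ne_top _) hcv1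
    have hwc : F₁ w = (((F₁ w).toReal : ℝ) : EReal) := (EReal.coe_toReal hwne (hF₁bot w)).symm
    set c : ℝ := (F₁ w).toReal with hcc
    have hcv2 := hJconv (xseq (k+1)) xm (1-t) t (by linarith) ht0 (by ring)
    rw [hJx k, hJxm, ← EReal.coe_mul, ← EReal.coe_mul, ← EReal.coe_add] at hcv2
    have hJw : J w = ((c - g (Ξ w) : ℝ) : EReal) := by
      show F₁ w - G (Ξ w) = _
      rw [hwc, hg, ← EReal.coe_sub]
    rw [hJw] at hcv2
    have hcv2' : c - g (Ξ w) ≤ (1-t) * jv k + t * α := EReal.coe_le_coe_iff.1 hcv2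
    have hk := hKEY (k+1) w c hwc
    have hΞw : Ξ w - Ξ (xseq (k+1)) = t • (Ξ xm - Ξ (xseq (k+1))) := by
      simp only [hw, map_add, map_smul]
      module
    rw [hΞw] at hk
    have hnorm : ‖t • (Ξ xm - Ξ (xseq (k+1)))‖^2 ≤ t^2 * M^2 := by
      rw [norm_smul, Real.norm_eq_abs, abs_of_nonneg ht0, mul_pow]
      have h := hMb k
      have h2 : (0:ℝ) ≤ ‖Ξ xm - Ξ (xseq (k+1))‖ := norm_nonneg _
      have h3 : ‖Ξ xm - Ξ (xseq (k+1))‖^2 ≤ M^2 := by nlinarith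
      exact mul_le_mul_of_nonneg_left h3 (sq_nonneg t)
    have hKnn : (0:ℝ) ≤ (K:ℝ) := K.coe_nonneg
    have h5 : (K:ℝ) * ‖t • (Ξ xm - Ξ (xseq (k+1)))‖^2 ≤ (K:ℝ) * (t^2 * M^2) :=
      mul_le_mul_of_nonneg_left hnorm hKnn
    have h6 : jv (k+1) ≤ c - g (Ξ w) + (K:ℝ) * (t^2 * M^2) := by linarith
    have h7 : jv (k+1) ≤ (1-t) * jv k + t * α + (K:ℝ) * (t^2 * M^2) := by linarith
    linarith [h7]
  -- convergence of the error sequence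
  set e : ℕ → ℝ := fun k => jv k - α with he
  have heanti : Antitone e := antitone_nat_of_succ_le (fun k => by
    show jv (k+1) - α ≤ jv k - α
    linarith [hmono k])
  have hebdd : BddBelow (Set.range e) := by
    refine ⟨0, ?_⟩
    rintro x ⟨k, rfl⟩
    show (0:ℝ) ≤ jv k - α
    linarith [hge k]
  have hetend : Filter.Tendsto e Filter.atTop (nhds (⨅ k, e k)) :=
    tendsto_atTop_ciInf heanti hebdd
  have hl0 : (0:ℝ) ≤ ⨅ k, e k := le_ciInf fun k => by
    show (0:ℝ) ≤ jv k - α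
    linarith [hge k]
  have hlle : ∀ t : ℝ, 0 < t → t ≤ 1 → (⨅ k, e k) ≤ ((K:ℝ) * M^2) * t := by
    intro t ht0 ht1
    have h1 : Filter.Tendsto (fun k => e (k+1)) Filter.atTop (nhds (⨅ k, e k)) :=
      hetend.comp (Filter.tendsto_add_atTop_nat 1)
    have h2 : Filter.Tendsto (fun k => (1-t) * e k + ((K:ℝ) * M^2) * t^2) Filter.atTop
        (nhds ((1-t) * (⨅ k, e k) + ((K:ℝ) * M^2) * t^2)) :=
      (hetend.const_mul _).add tendsto_const_nhds
    have h3 : (⨅ k, e k) ≤ (1-t) * (⨅ k, e k) + ((K:ℝ) * M^2) * t^2 :=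
      le_of_tendsto_of_tendsto' h1 h2 (fun k => hrec k t (le_of_lt ht0) ht1)
    nlinarith [h3, ht0]
  have hCq0 : (0:ℝ) ≤ (K:ℝ) * M^2 := mul_nonneg K.coe_nonneg (sq_nonneg M)
  have hl_eq : (⨅ k, e k) = 0 := by
    refine le_antisymm ?_ hl0
    refine le_of_forall_pos_le_add fun ε hε => ?_
    have hC : (0:ℝ) < (K:ℝ) * M^2 + 1 := by linarith
    set t : ℝ := min 1 (ε / ((K:ℝ) * M^2 + 1)) with htd
    have ht0 : 0 < t := lt_min one_pos (div_pos hε hC)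
    have h := hlle t ht0 (min_le_left _ _)
    have h2 : t ≤ ε / ((K:ℝ) * M^2 + 1) := min_le_right _ _
    have h3 : ((K:ℝ) * M^2) * t ≤ ε := by
      rw [le_div_iff₀ hC] at h2
      nlinarith [ht0.le]
    linarith
  have hjv_tend : Filter.Tendsto jv Filter.atTop (nhds α) := by
    have h1 : Filter.Tendsto e Filter.atTop (nhds 0) := hl_eq ▸ hetend
    have h2 := h1.add_const α
    rw [zero_add] at h2
    refine h2.congr fun k => ?_
    show jv k - α + α = jv k
    ring
  have hshift : Filter.Tendsto (fun k => J (xseq (k+1))) Filter.atTop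
      (nhds ((α : ℝ) : EReal)) := by
    have h1 : Filter.Tendsto (fun k => ((jv k : ℝ) : EReal)) Filter.atTop
        (nhds ((α:ℝ):EReal)) := by
      rw [← EReal.tendsto_coe] at hjv_tend
      exact hjv_tend
    exact h1.congr (fun k => (hJx k).symm)
  show Filter.Tendsto (fun k => J (xseq k)) Filter.atTop (nhds (⨅ w, J w))
  rw [hiInf]
  exact (Filter.tendsto_add_atTop_iff_nat 1).1 hshift
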